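/- arXiv:1211.0978 — 4 statements merged into one kernel-verified Lean document; each statement's English description precedes it below -/
import Mathlib

section
/- Let G = (V,E) be a graph, let v ∈ V with N₃(v) ≠ ∅ (where N₃(v) is the set of neighbors u of v such that N(u) ⊆ N(v) ∪ {v} and u has no neighbor w with N(w) \ (N(v) ∪ {v}) ≠ ∅). If D is a total dominating set of G with v ∉ D, then there exists a vertex u ∈ D ∩ N(v) with N(u) ⊆ N(v) ∪ {v}, and the set D' = (D \ {u}) ∪ {v} is also a total dominating set of G with |D'| ≤ |D|. -/
def N1 {V : Type*} (G : SimpleGraph V) (v : V) : Set V :=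
  {u | G.Adj v u ∧ ∃ x, G.Adj u x ∧ x ∉ G.neighborSet v ∪ {v}}

def N2 {V : Type*} (G : SimpleGraph V) (v : V) : Set V :=
  {u | G.Adj v u ∧ u ∉ N1 G v ∧ ∃ x ∈ N1 G v, G.Adj u x}

def N3 {V : Type*} (G : SimpleGraph V) (v : V) : Set V :=
  {u | G.Adj v u ∧ u ∉ N1 G v ∧ u ∉ N2 G v}

/-!
Pick `w ∈ N₃(v)` and a vertex `u ∈ D` adjacent to `w`. As `N(w) ⊆ N[v]` and `v ∉ D`, `u` is a
neighbour of `v`; as `w ∉ N₂(v)`, `u ∉ N₁(v)`, i.e. `N(u) ⊆ N[v]`. So a vertex other than `v` that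
was dominated by `u` is a neighbour of `v` and is dominated by `v` after the exchange, while `v` is
dominated by a dominator of `u`, which lies in `N(u) \ {v} ⊆ N(v)`.
-/

def SimpleGraph.IsTotalDominatingSet {V : Type*} (G : SimpleGraph V) (D : Set V) : Prop :=
  ∀ x, ∃ d ∈ D, G.Adj x d

section

variable {V : Type*} {G : SimpleGraph V} {D : Set V} {v u w : V}

theorem SimpleGraph.IsTotalDominatingSet.exchange (hD : G.IsTotalDominatingSet D) (huD : u ∈ D)
    (hv : v ∉ D) (hu : G.neighborSet u ⊆ G.neighborSet v ∪ {v}) :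
    G.IsTotalDominatingSet (D \ {u} ∪ {v}) := by
  intro x
  obtain ⟨d, hdD, hxd⟩ := hD x
  rcases eq_or_ne d u with rfl | hdu
  · rcases eq_or_ne x v with rfl | hxv
    · obtain ⟨e, heD, hde⟩ := hD d
      exact ⟨e, Or.inl ⟨heD, hde.ne'⟩, (hu hde).resolve_right (ne_of_mem_of_not_mem heD hv)⟩
    · exact ⟨v, Or.inr rfl, ((hu hxd.symm).resolve_right hxv).symm⟩
  · exact ⟨d, Or.inl ⟨hdD, hdu⟩, hxd⟩

theorem neighborSet_subset_of_notMem_N1 (hvu : G.Adj v u) (hu : u ∉ N1 G v) :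
    G.neighborSet u ⊆ G.neighborSet v ∪ {v} :=
  fun x hx => by_contra fun hxv => hu ⟨hvu, x, hx, hxv⟩

theorem neighborSet_subset_of_mem_N3 (hw : w ∈ N3 G v) :
    G.neighborSet w ⊆ G.neighborSet v ∪ {v} :=
  neighborSet_subset_of_notMem_N1 hw.1 hw.2.1

theorem notMem_N1_of_adj_of_mem_N3 (hw : w ∈ N3 G v) (hwu : G.Adj w u) : u ∉ N1 G v :=
  fun hu => hw.2.2 ⟨hw.1, hw.2.1, u, hu, hwu⟩

end

theorem exchange_vertex_for_confined_dominator_general {V : Type*} (G : SimpleGraph V) (v : V)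
    (hN3 : (N3 G v).Nonempty)
    (D : Set V)
    (hD : ∀ u : V, ∃ d ∈ D, G.Adj u d) (hv : v ∉ D) :
    ∃ u ∈ D, u ∈ G.neighborSet v ∧ G.neighborSet u ⊆ G.neighborSet v ∪ {v} ∧
      (∀ x : V, ∃ d ∈ (D \ {u}) ∪ {v}, G.Adj x d) ∧
      ((D \ {u}) ∪ {v}).ncard ≤ D.ncard := by
  obtain ⟨w, hw⟩ := hN3
  obtain ⟨u, huD, hwu⟩ := hD w
  have hvu : G.Adj v u :=
    (neighborSet_subset_of_mem_N3 hw hwu).resolve_right (ne_of_mem_of_not_mem huD hv)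
  have hu := neighborSet_subset_of_notMem_N1 hvu (notMem_N1_of_adj_of_mem_N3 hw hwu)
  refine ⟨u, huD, hvu, hu, SimpleGraph.IsTotalDominatingSet.exchange hD huD hv hu, ?_⟩
  rw [Set.union_singleton, Set.ncard_exchange hv huD]

/-- if N₃(v) ≠ ∅ and D is a total dominating set avoiding v, then some
u ∈ D ∩ N(v) has N(u) ⊆ N(v) ∪ {v}, and exchanging u for v preserves total domination
without increasing the size. -/
theorem exchange_vertex_for_confined_dominator {V : Type*} (G : SimpleGraph V) (v : V)
    (hN3 : (N3 G v).Nonempty)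
    (D : Set V) (hDfin : D.Finite)
    (hD : ∀ u : V, ∃ d ∈ D, G.Adj u d) (hv : v ∉ D) :
    ∃ u ∈ D, u ∈ G.neighborSet v ∧ G.neighborSet u ⊆ G.neighborSet v ∪ {v} ∧
      (∀ x : V, ∃ d ∈ (D \ {u}) ∪ {v}, G.Adj x d) ∧
      ((D \ {u}) ∪ {v}).ncard ≤ D.ncard :=
  exchange_vertex_for_confined_dominator_general G v hN3 D hD hv
end

section
/- Let G = (V,E) be a graph, v ∈ V with N₃(v) ≠ ∅, and let G' be obtained from G by deleting all vertices of N₂(v) ∪ N₃(v) and adding a new vertex v' adjacent only to v. Then γₜ(G) = γₜ(G'), where γₜ denotes the minimum size of a total dominating set. -/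
def IsTDS {V : Type*} (G : SimpleGraph V) (D : Set V) : Prop :=
  ∀ u : V, ∃ d ∈ D, G.Adj u d

noncomputable def gammaT {V : Type*} (G : SimpleGraph V) : ℕ :=
  sInf {n | ∃ D : Set V, D.Finite ∧ D.ncard = n ∧ IsTDS G D}

/-- The graph G' obtained from G by deleting the vertices of N₂(v) ∪ N₃(v) and
adding a fresh pendant vertex v' adjacent only to v. The left summand consists of the
surviving vertices of G, the right summand (`Sum.inr ()`) is the new vertex v'. -/
def reducedGraph {V : Type*} (G : SimpleGraph V) (v : V) :
    SimpleGraph ({u : V // u ∉ N2 G v ∧ u ∉ N3 G v} ⊕ Unit) :=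
  SimpleGraph.fromRel (fun a b =>
    match a, b with
    | Sum.inl a, Sum.inl b => G.Adj a.1 b.1
    | Sum.inl a, Sum.inr _ => a.1 = v
    | Sum.inr _, _ => False)

section TotalDomination

variable {V W : Type*} (G : SimpleGraph V) (H : SimpleGraph W)

def TDSTransfer : Prop :=
  ∀ D : Set V, D.Finite → IsTDS G D → ∃ D' : Set W, D'.Finite ∧ IsTDS H D' ∧ D'.ncard ≤ D.ncard

variable {G H}

theorem gammaT_le_ncard {D : Set V} (hD : D.Finite) (hDT : IsTDS G D) : gammaT G ≤ D.ncard :=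
  Nat.sInf_le ⟨D, hD, rfl, hDT⟩

theorem exists_isTDS_ncard_eq_gammaT (hG : ∃ D : Set V, D.Finite ∧ IsTDS G D) :
    ∃ D : Set V, D.Finite ∧ IsTDS G D ∧ D.ncard = gammaT G := by
  obtain ⟨D, hD, hDT⟩ := hG
  have hne : {n | ∃ D : Set V, D.Finite ∧ D.ncard = n ∧ IsTDS G D}.Nonempty :=
    ⟨D.ncard, D, hD, rfl, hDT⟩
  obtain ⟨D₀, hD₀, hcard, hD₀T⟩ := Nat.sInf_mem hne
  exact ⟨D₀, hD₀, hD₀T, hcard⟩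

theorem gammaT_eq_zero (hG : ¬ ∃ D : Set V, D.Finite ∧ IsTDS G D) : gammaT G = 0 := by
  have hempty : {n | ∃ D : Set V, D.Finite ∧ D.ncard = n ∧ IsTDS G D} = ∅ :=
    Set.eq_empty_of_forall_notMem fun _ ⟨D, hD, _, hDT⟩ => hG ⟨D, hD, hDT⟩
  rw [gammaT, hempty, Nat.sInf_empty]

theorem TDSTransfer.gammaT_le (hGH : TDSTransfer G H) (hG : ∃ D : Set V, D.Finite ∧ IsTDS G D) :
    gammaT H ≤ gammaT G := by
  obtain ⟨D, hD, hDT, hcard⟩ := exists_isTDS_ncard_eq_gammaT hG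
  obtain ⟨D', hD', hD'T, hle⟩ := hGH D hD hDT
  exact hcard ▸ (gammaT_le_ncard hD' hD'T).trans hle

theorem gammaT_eq_of_tdsTransfer (hGH : TDSTransfer G H) (hHG : TDSTransfer H G) :
    gammaT G = gammaT H := by
  by_cases hG : ∃ D : Set V, D.Finite ∧ IsTDS G D
  · have hH : ∃ D' : Set W, D'.Finite ∧ IsTDS H D' :=
      let ⟨D, hD, hDT⟩ := hG
      let ⟨D', hD', hD'T, _⟩ := hGH D hD hDT
      ⟨D', hD', hD'T⟩
    exact le_antisymm (hHG.gammaT_le hH) (hGH.gammaT_le hG)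
  · have hH : ¬ ∃ D' : Set W, D'.Finite ∧ IsTDS H D' := fun ⟨D', hD', hD'T⟩ =>
      let ⟨D, hD, hDT, _⟩ := hHG D' hD' hD'T
      hG ⟨D, hD, hDT⟩
    rw [gammaT_eq_zero hG, gammaT_eq_zero hH]

end TotalDomination

section Neighbourhoods

variable {V : Type*} {G : SimpleGraph V} {v : V}

theorem mem_N2_union_N3_iff {u : V} : u ∈ N2 G v ∪ N3 G v ↔ G.Adj v u ∧ u ∉ N1 G v := by
  by_cases h2 : u ∈ N2 G v
  · exact ⟨fun _ => ⟨h2.1, h2.2.1⟩, fun _ => .inl h2⟩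
  · exact ⟨fun h => h.resolve_left h2 |>.imp_right And.left, fun h => .inr ⟨h.1, h.2, h2⟩⟩

theorem eq_or_adj_of_mem_N2_union_N3 {d x : V} (hd : d ∈ N2 G v ∪ N3 G v) (hdx : G.Adj d x) :
    x = v ∨ G.Adj v x := by
  obtain ⟨hvd, hd1⟩ := mem_N2_union_N3_iff.1 hd
  by_contra! h
  exact hd1 ⟨hvd, x, hdx, by simpa [not_or] using h⟩

theorem eq_or_mem_N2_union_N3_of_adj_of_mem_N3 {w x : V} (hw : w ∈ N3 G v) (hwx : G.Adj w x) :
    x = v ∨ x ∈ N2 G v ∪ N3 G v :=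
  (eq_or_adj_of_mem_N2_union_N3 (Or.inr hw) hwx).imp_right fun hvx =>
    mem_N2_union_N3_iff.2 ⟨hvx, fun hx1 => hw.2.2 ⟨hw.1, hw.2.1, x, hx1, hwx⟩⟩

end Neighbourhoods

section ReducedGraph

variable {V : Type*} (G : SimpleGraph V) (v : V)

def reducedCentre : {u : V // u ∉ N2 G v ∧ u ∉ N3 G v} :=
  ⟨v, fun h => G.irrefl h.1, fun h => G.irrefl h.1⟩

open Classical in
noncomputable def reducedRetract (u : V) : {u : V // u ∉ N2 G v ∧ u ∉ N3 G v} :=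
  if h : u ∉ N2 G v ∧ u ∉ N3 G v then ⟨u, h⟩ else reducedCentre G v

variable {G v}

@[simp]
theorem reducedGraph_adj_inl_inl {a b : {u : V // u ∉ N2 G v ∧ u ∉ N3 G v}} :
    (reducedGraph G v).Adj (Sum.inl a) (Sum.inl b) ↔ G.Adj a.1 b.1 := by
  simp only [reducedGraph, SimpleGraph.fromRel_adj, ne_eq, Sum.inl.injEq]
  exact ⟨fun ⟨_, h⟩ => h.elim id (G.adj_symm ·), fun h => ⟨fun hab => G.irrefl (hab ▸ h), .inl h⟩⟩

@[simp]
theorem reducedGraph_adj_inl_inr {a : {u : V // u ∉ N2 G v ∧ u ∉ N3 G v}} {x : Unit} :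
    (reducedGraph G v).Adj (Sum.inl a) (Sum.inr x) ↔ a = reducedCentre G v := by
  simp [reducedGraph, reducedCentre, Subtype.ext_iff]

@[simp]
theorem reducedGraph_adj_inr_inl {a : {u : V // u ∉ N2 G v ∧ u ∉ N3 G v}} {x : Unit} :
    (reducedGraph G v).Adj (Sum.inr x) (Sum.inl a) ↔ a = reducedCentre G v :=
  (reducedGraph G v).adj_comm _ _ |>.trans reducedGraph_adj_inl_inr

@[simp]
theorem reducedGraph_not_adj_inr_inr {x y : Unit} :
    ¬ (reducedGraph G v).Adj (Sum.inr x) (Sum.inr y) := by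
  simp [reducedGraph]

theorem reducedRetract_of_survives {u : V} (h : u ∉ N2 G v ∧ u ∉ N3 G v) :
    reducedRetract G v u = ⟨u, h⟩ := by
  simp [reducedRetract, h]

theorem reducedRetract_eq_reducedCentre {u : V} (h : u = v ∨ u ∈ N2 G v ∪ N3 G v) :
    reducedRetract G v u = reducedCentre G v := by
  rcases h with rfl | h
  · exact reducedRetract_of_survives _
  · have hs : ¬ (u ∉ N2 G v ∧ u ∉ N3 G v) := fun hs => h.elim hs.1 hs.2
    simp only [reducedRetract, hs, dite_false]

theorem adj_reducedRetract {b d : V} (hb : b ≠ v) (hbd : G.Adj b d) :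
    G.Adj b (reducedRetract G v d).1 := by
  by_cases hd : d ∉ N2 G v ∧ d ∉ N3 G v
  · rwa [reducedRetract_of_survives hd]
  · have hd' : d ∈ N2 G v ∪ N3 G v := by tauto
    rw [reducedRetract_eq_reducedCentre (.inr hd')]
    exact ((eq_or_adj_of_mem_N2_union_N3 hd' hbd.symm).resolve_left hb).symm

end ReducedGraph

theorem Set.ncard_image_lt_of_ne_of_eq {α β : Type*} {f : α → β} {s : Set α} {a b : α}
    (hs : s.Finite) (ha : a ∈ s) (hb : b ∈ s) (hab : a ≠ b) (hf : f a = f b) :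
    (f '' s).ncard < s.ncard :=
  (Set.ncard_image_le hs).lt_of_ne fun h => hab (Set.injOn_of_ncard_image_eq h hs ha hb hf)

section Rule1

variable {V : Type*} {G : SimpleGraph V} {v : V}

theorem isTDS_reducedGraph {D : Set V} (hDT : IsTDS G D)
    {D' : Set ({u : V // u ∉ N2 G v ∧ u ∉ N3 G v} ⊕ Unit)}
    (hsub : Sum.inl '' (reducedRetract G v '' D) ⊆ D') (hcentre : Sum.inl (reducedCentre G v) ∈ D')
    (hdom : ∃ d ∈ D', (reducedGraph G v).Adj (Sum.inl (reducedCentre G v)) d) :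
    IsTDS (reducedGraph G v) D' := by
  rintro (b | x)
  · by_cases hb : b = reducedCentre G v
    · exact hb ▸ hdom
    · obtain ⟨d, hd, hbd⟩ := hDT b.1
      refine ⟨Sum.inl (reducedRetract G v d), hsub ⟨_, ⟨d, hd, rfl⟩, rfl⟩, ?_⟩
      exact reducedGraph_adj_inl_inl.2 (adj_reducedRetract (fun h => hb (Subtype.ext h)) hbd)
  · exact ⟨_, hcentre, reducedGraph_adj_inr_inl.2 rfl⟩

theorem tdsTransfer_to_reducedGraph (hN3 : (N3 G v).Nonempty) :
    TDSTransfer G (reducedGraph G v) := by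
  intro D hD hDT
  have hD' : (Sum.inl '' (reducedRetract G v '' D) : Set (_ ⊕ Unit)).ncard =
      (reducedRetract G v '' D).ncard := Set.ncard_image_of_injective _ Sum.inl_injective
  by_cases hN1 : ∃ c ∈ D, c ∈ N1 G v
  · obtain ⟨c, hcD, hc1⟩ := hN1
    have hcs : c ∉ N2 G v ∧ c ∉ N3 G v := ⟨fun h => h.2.1 hc1, fun h => h.2.1 hc1⟩
    -- Even if `v ∉ D`, the dominator of a vertex of `N₃(v)` collapses onto `v`.
    obtain ⟨w, hw⟩ := hN3
    obtain ⟨d, hdD, hwd⟩ := hDT w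
    have hd := reducedRetract_eq_reducedCentre (eq_or_mem_N2_union_N3_of_adj_of_mem_N3 hw hwd)
    refine ⟨_, (hD.image _).image _, isTDS_reducedGraph hDT subset_rfl ⟨_, ⟨d, hdD, hd⟩, rfl⟩
      ⟨_, ⟨_, ⟨c, hcD, rfl⟩, rfl⟩, ?_⟩, hD' ▸ Set.ncard_image_le hD⟩
    rw [reducedRetract_of_survives hcs, reducedGraph_adj_inl_inl]
    exact hc1.1
  · simp only [not_exists, not_and] at hN1
    -- The dominator `a` of `v` and the dominator `c` of `a` are distinct and both collapse onto
    -- `v`, which pays for the pendant vertex.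
    obtain ⟨a, haD, hva⟩ := hDT v
    have ha : a ∈ N2 G v ∪ N3 G v := mem_N2_union_N3_iff.2 ⟨hva, hN1 a haD⟩
    obtain ⟨c, hcD, hac⟩ := hDT a
    have hc : c = v ∨ c ∈ N2 G v ∪ N3 G v := (eq_or_adj_of_mem_N2_union_N3 ha hac).imp_right
      fun hvc => mem_N2_union_N3_iff.2 ⟨hvc, hN1 c hcD⟩
    have hra := reducedRetract_eq_reducedCentre (.inr ha)
    have hlt : (reducedRetract G v '' D).ncard < D.ncard := Set.ncard_image_lt_of_ne_of_eq hD haD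
      hcD (G.ne_of_adj hac) (hra.trans (reducedRetract_eq_reducedCentre hc).symm)
    refine ⟨_, ((hD.image _).image _).insert (Sum.inr ()),
      isTDS_reducedGraph hDT (Set.subset_insert _ _)
        (Set.mem_insert_of_mem _ ⟨_, ⟨a, haD, hra⟩, rfl⟩)
        ⟨_, Set.mem_insert _ _, reducedGraph_adj_inl_inr.2 rfl⟩, ?_⟩
    calc _ ≤ (Sum.inl '' (reducedRetract G v '' D) : Set (_ ⊕ Unit)).ncard + 1 :=
          Set.ncard_insert_le _ _
      _ ≤ D.ncard := by omega

theorem tdsTransfer_from_reducedGraph {w : V} (hw : G.Adj v w) :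
    TDSTransfer (reducedGraph G v) G := by
  intro D' hD' hD'T
  let f : {u : V // u ∉ N2 G v ∧ u ∉ N3 G v} ⊕ Unit → V := Sum.elim Subtype.val fun _ => w
  refine ⟨f '' D', hD'.image f, ?_, Set.ncard_image_le hD'⟩
  have hcentre : Sum.inl (reducedCentre G v) ∈ D' := by
    obtain ⟨b | x, hd, hadj⟩ := hD'T (Sum.inr ())
    · exact reducedGraph_adj_inr_inl.1 hadj ▸ hd
    · exact (reducedGraph_not_adj_inr_inr hadj).elim
  intro u
  by_cases hu : u ∉ N2 G v ∧ u ∉ N3 G v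
  · obtain ⟨d, hd, hadj⟩ := hD'T (Sum.inl ⟨u, hu⟩)
    refine ⟨f d, Set.mem_image_of_mem f hd, ?_⟩
    rcases d with b | x
    · exact reducedGraph_adj_inl_inl.1 hadj
    · cases congrArg Subtype.val (reducedGraph_adj_inl_inr.1 hadj)
      exact hw
  · have hvu : G.Adj v u := (mem_N2_union_N3_iff.1 (by tauto)).1
    exact ⟨v, ⟨_, hcentre, rfl⟩, hvu.symm⟩

end Rule1

theorem rule1_preserves_gammaT_general {V : Type*} (G : SimpleGraph V) (v : V)
    (hN3 : (N3 G v).Nonempty) :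
    gammaT G = gammaT (reducedGraph G v) :=
  gammaT_eq_of_tdsTransfer (tdsTransfer_to_reducedGraph hN3)
    (tdsTransfer_from_reducedGraph hN3.some_mem.1)

/-- Rule 1 preserves γₜ: if N₃(v) ≠ ∅ then γₜ(G) = γₜ(G'). -/
theorem rule1_preserves_gammaT {V : Type*} (G : SimpleGraph V) (v : V)
    (hN3 : (N3 G v).Nonempty)
    (hG : ∃ D : Set V, D.Finite ∧ IsTDS G D)
    (hG' : ∃ D' : Set ({u : V // u ∉ N2 G v ∧ u ∉ N3 G v} ⊕ Unit),
      D'.Finite ∧ IsTDS (reducedGraph G v) D') :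
    gammaT G = gammaT (reducedGraph G v) :=
  rule1_preserves_gammaT_general G v hN3
end

section
/- Let G = (V,E) be a graph and G' = (V',E') the graph defined by: V' = V ∪ {e_{uw} : {u,w} ∈ E} ∪ {v₁, v₂, v₃, v₄ : v ∈ V}, with edges E' = {{u, e_{uw}}, {w, e_{uw}} : {u,w} ∈ E} ∪ {{v,v₁}, {v₁,v₂}, {v₁,v₃}, {v₂,v₄} : v ∈ V}. Then G has a vertex cover of size at most k if and only if G' has a total dominating set of size at most k + 2|V|. -/
/-- Gadget indices: 0 ↦ v₁, 1 ↦ v₂, 2 ↦ v₃, 3 ↦ v₄. -/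
abbrev RedV (V : Type*) (G : SimpleGraph V) := V ⊕ G.edgeSet ⊕ (V × Fin 4)

/-- The subdivision-plus-gadget graph G' of the NP-hardness reduction: each edge {u,w}
of G is replaced by a path u – e_{uw} – w, and each vertex v of G receives a pendant
path v – v₁ – v₂ – v₄ together with an extra leaf v₃ attached to v₁. -/
def redGraph {V : Type*} (G : SimpleGraph V) : SimpleGraph (RedV V G) :=
  SimpleGraph.fromRel (fun a b =>
    match a, b with
    | Sum.inl u, Sum.inr (Sum.inl e) => u ∈ e.1
    | Sum.inl u, Sum.inr (Sum.inr (w, i)) => u = w ∧ i = 0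
    | Sum.inr (Sum.inr (w, i)), Sum.inr (Sum.inr (w', j)) =>
        w = w' ∧ ((i = 0 ∧ j = 1) ∨ (i = 0 ∧ j = 2) ∨ (i = 1 ∧ j = 3))
    | _, _ => False)

/-! The leaves v₃ and v₄ force every total dominating set of G' to contain the 2|V| hubs v₁
and v₂, which on their own already dominate all gadget vertices and all original vertices.
What remains to be dominated are the subdivision vertices e_{uw}, whose only neighbours are
u and w: so the original vertices of a total dominating set form a vertex cover, and
conversely a vertex cover together with the hubs is a total dominating set. -/

namespace SimpleGraph

variable {W : Type*}

def IsTotalDominatingSet_s7 (H : SimpleGraph W) (D : Set W) : Prop :=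
  ∀ x, ∃ d ∈ D, H.Adj x d

theorem IsTotalDominatingSet_s7.mem_of_forall_adj_eq {H : SimpleGraph W} {D : Set W}
    (hD : H.IsTotalDominatingSet_s7 D) {x y : W} (hy : ∀ d, H.Adj x d → d = y) : y ∈ D := by
  obtain ⟨d, hd, hxd⟩ := hD x
  exact hy d hxd ▸ hd

end SimpleGraph

section Reduction

variable {V : Type*} (G : SimpleGraph V)

theorem redGraph_adj_inl_gadget_zero (v : V) :
    (redGraph G).Adj (Sum.inl v) (Sum.inr (Sum.inr (v, 0))) := by
  simp [redGraph]

theorem redGraph_adj_gadget_zero_one (v : V) :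
    (redGraph G).Adj (Sum.inr (Sum.inr (v, 0))) (Sum.inr (Sum.inr (v, 1))) := by
  simp [redGraph]

theorem redGraph_adj_gadget_two_iff (v : V) (d : RedV V G) :
    (redGraph G).Adj (Sum.inr (Sum.inr (v, 2))) d ↔ d = Sum.inr (Sum.inr (v, 0)) := by
  rcases d with u | e | ⟨w, i⟩ <;> simp [redGraph]; omega

theorem redGraph_adj_gadget_three_iff (v : V) (d : RedV V G) :
    (redGraph G).Adj (Sum.inr (Sum.inr (v, 3))) d ↔ d = Sum.inr (Sum.inr (v, 1)) := by
  rcases d with u | e | ⟨w, i⟩ <;> simp [redGraph]; omega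

theorem redGraph_adj_edge_iff (e : G.edgeSet) (d : RedV V G) :
    (redGraph G).Adj (Sum.inr (Sum.inl e)) d ↔ ∃ u ∈ e.1, d = Sum.inl u := by
  rcases d with u | e' | ⟨w, i⟩ <;> simp [redGraph]

def gadgetHubs : Set (RedV V G) := (Sum.inr ∘ Sum.inr) '' (Set.univ ×ˢ {0, 1})

theorem ncard_gadgetHubs [Finite V] : (gadgetHubs G).ncard = 2 * Nat.card V := by
  rw [gadgetHubs, Set.ncard_image_of_injective _ (Sum.inr_injective.comp Sum.inr_injective),
    Set.ncard_prod, Set.ncard_univ, Set.ncard_pair (by decide), mul_comm]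

theorem ncard_image_inl_union_gadgetHubs [Finite V] (C : Set V) :
    (Sum.inl '' C ∪ gadgetHubs G).ncard = C.ncard + 2 * Nat.card V := by
  have hdisj : Disjoint (Sum.inl '' C) (gadgetHubs G) := by
    simp [Set.disjoint_left, gadgetHubs]
  rw [Set.ncard_union_eq hdisj, Set.ncard_image_of_injective _ Sum.inl_injective,
    ncard_gadgetHubs]

variable {G}

theorem SimpleGraph.IsTotalDominatingSet_s7.gadgetHubs_subset {D : Set (RedV V G)}
    (hD : (redGraph G).IsTotalDominatingSet_s7 D) : gadgetHubs G ⊆ D := by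
  rintro _ ⟨⟨v, i⟩, ⟨-, hi⟩, rfl⟩
  rcases hi with rfl | rfl
  · exact hD.mem_of_forall_adj_eq fun d => (redGraph_adj_gadget_two_iff G v d).mp
  · exact hD.mem_of_forall_adj_eq fun d => (redGraph_adj_gadget_three_iff G v d).mp

theorem SimpleGraph.IsTotalDominatingSet_s7.isVertexCover_preimage_inl {D : Set (RedV V G)}
    (hD : (redGraph G).IsTotalDominatingSet_s7 D) : G.IsVertexCover (Sum.inl ⁻¹' D) := by
  intro u w huw
  obtain ⟨d, hd, hadj⟩ := hD (Sum.inr (Sum.inl ⟨s(u, w), huw⟩))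
  obtain ⟨x, hx, rfl⟩ := (redGraph_adj_edge_iff G _ d).mp hadj
  rcases Sym2.mem_iff.mp hx with rfl | rfl
  · exact Or.inl hd
  · exact Or.inr hd

theorem SimpleGraph.IsVertexCover.isTotalDominatingSet_image_inl_union_gadgetHubs {C : Set V}
    (hC : G.IsVertexCover C) : (redGraph G).IsTotalDominatingSet_s7 (Sum.inl '' C ∪ gadgetHubs G) := by
  have hub : ∀ v (i : Fin 4), i = 0 ∨ i = 1 →
      (Sum.inr (Sum.inr (v, i)) : RedV V G) ∈ Sum.inl '' C ∪ gadgetHubs G :=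
    fun v i hi => Or.inr ⟨(v, i), ⟨trivial, hi⟩, rfl⟩
  rintro (v | ⟨e, he⟩ | ⟨v, i⟩)
  · exact ⟨_, hub v 0 (.inl rfl), redGraph_adj_inl_gadget_zero G v⟩
  · induction e using Sym2.ind with
    | _ u w =>
      obtain ⟨x, hx, hxC⟩ : ∃ x ∈ s(u, w), x ∈ C := by
        rcases hC he with hu | hw
        exacts [⟨u, Sym2.mem_mk_left u w, hu⟩, ⟨w, Sym2.mem_mk_right u w, hw⟩]
      exact ⟨_, Or.inl ⟨x, hxC, rfl⟩, (redGraph_adj_edge_iff G _ _).mpr ⟨x, hx, rfl⟩⟩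
  · fin_cases i
    · exact ⟨_, hub v 1 (.inr rfl), redGraph_adj_gadget_zero_one G v⟩
    · exact ⟨_, hub v 0 (.inl rfl), (redGraph_adj_gadget_zero_one G v).symm⟩
    · exact ⟨_, hub v 0 (.inl rfl), (redGraph_adj_gadget_two_iff G v _).mpr rfl⟩
    · exact ⟨_, hub v 1 (.inr rfl), (redGraph_adj_gadget_three_iff G v _).mpr rfl⟩

end Reduction

/-- G has a vertex cover of size ≤ k iff G' has a total dominating set of
size ≤ k + 2|V|. -/
theorem vertexCover_iff_totalDominating {V : Type*} [Fintype V]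
    (G : SimpleGraph V) (k : ℕ) :
    (∃ C : Set V, C.ncard ≤ k ∧ ∀ u w : V, G.Adj u w → u ∈ C ∨ w ∈ C) ↔
    (∃ D : Set (RedV V G), D.ncard ≤ k + 2 * Nat.card V ∧
      ∀ x : RedV V G, ∃ d ∈ D, (redGraph G).Adj x d) := by
  constructor
  · rintro ⟨C, hCk, hC : G.IsVertexCover C⟩
    refine ⟨_, ?_, hC.isTotalDominatingSet_image_inl_union_gadgetHubs⟩
    rw [ncard_image_inl_union_gadgetHubs]
    omega
  · rintro ⟨D, hDk, hD : (redGraph G).IsTotalDominatingSet_s7 D⟩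
    refine ⟨Sum.inl ⁻¹' D, ?_, hD.isVertexCover_preimage_inl⟩
    have hsub : Sum.inl '' (Sum.inl ⁻¹' D) ∪ gadgetHubs G ⊆ D :=
      Set.union_subset (Set.image_preimage_subset _ _) hD.gadgetHubs_subset
    have hcard : (Sum.inl ⁻¹' D).ncard + 2 * Nat.card V ≤ k + 2 * Nat.card V :=
      calc (Sum.inl ⁻¹' D).ncard + 2 * Nat.card V
          = (Sum.inl '' (Sum.inl ⁻¹' D) ∪ gadgetHubs G).ncard :=
            (ncard_image_inl_union_gadgetHubs G _).symm
        _ ≤ D.ncard := Set.ncard_le_ncard hsub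
        _ ≤ k + 2 * Nat.card V := hDk
    omega
end

section
/- Let G be a graph and v, w distinct vertices such that no subset of N₂(v,w) ∪ N₃(v,w) of size at most 3 dominates all of N₃(v,w) (i.e., there is no N₃-total dominating set of size at most 3 avoiding v and w). Then every total dominating set D of G either contains v or w, or D contains at least 4 vertices of N₂(v,w) ∪ N₃(v,w); consequently, there always exists a total dominating set D' of G with |D'| ≤ |D| and {v,w} ∩ D' ≠ ∅. -/
/-- The joint open neighborhood N(v,w) = (N(v) ∪ N(w)) \ {v,w}. -/
def Npair {V : Type*} (G : SimpleGraph V) (v w : V) : Set V :=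
  (G.neighborSet v ∪ G.neighborSet w) \ {v, w}

def NP1 {V : Type*} (G : SimpleGraph V) (v w : V) : Set V :=
  {u | u ∈ Npair G v w ∧ ∃ x, G.Adj u x ∧ x ∉ Npair G v w ∪ {v, w}}

def NP2 {V : Type*} (G : SimpleGraph V) (v w : V) : Set V :=
  {u | u ∈ Npair G v w ∧ u ∉ NP1 G v w ∧ ∃ x ∈ NP1 G v w, G.Adj u x}

def NP3 {V : Type*} (G : SimpleGraph V) (v w : V) : Set V :=
  Npair G v w \ (NP1 G v w ∪ NP2 G v w)

/-!
Vertices of N₂(v,w) ∪ N₃(v,w) have all their neighbours in N(v,w) ∪ {v,w}, and a neighbour of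
a vertex of N₃(v,w) is either v, w or again in N₂(v,w) ∪ N₃(v,w). Hence a total dominating set
avoiding v and w dominates N₃(v,w) through its part T in N₂(v,w) ∪ N₃(v,w), which forces
|T| ≥ 4. Replacing T by {v, w, s, t}, with s a neighbour of v and t one of w, keeps the set
total dominating (everything T dominated is v, w or adjacent to one of them) and does not
increase its size.
-/

namespace SimpleGraph

variable {V : Type*}

def IsTotalDominating (G : SimpleGraph V) (D : Set V) : Prop :=
  ∀ u, ∃ d ∈ D, G.Adj u d

theorem IsTotalDominating.sdiff_union {G : SimpleGraph V} {D T : Set V} {v w s t : V}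
    (hD : G.IsTotalDominating D)
    (hT : ∀ x ∈ T, ∀ u, G.Adj x u → G.Adj u v ∨ G.Adj u w ∨ u = v ∨ u = w)
    (hs : G.Adj v s) (ht : G.Adj w t) :
    G.IsTotalDominating (D \ T ∪ {v, w, s, t}) := by
  intro u
  obtain ⟨d, hdD, hud⟩ := hD u
  by_cases hdT : d ∈ T
  · rcases hT d hdT u hud.symm with huv | huw | rfl | rfl
    · exact ⟨v, by simp, huv⟩
    · exact ⟨w, by simp, huw⟩
    · exact ⟨s, by simp, hs⟩
    · exact ⟨t, by simp, ht⟩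
  · exact ⟨d, Or.inl ⟨hdD, hdT⟩, hud⟩

end SimpleGraph

theorem Set.ncard_sdiff_union_le {α : Type*} {D T S : Set α} (hD : D.Finite) (hTD : T ⊆ D)
    (hST : S.ncard ≤ T.ncard) : (D \ T ∪ S).ncard ≤ D.ncard := by
  have hTD_le : T.ncard ≤ D.ncard := Set.ncard_le_ncard hTD hD
  calc (D \ T ∪ S).ncard ≤ (D \ T).ncard + S.ncard := Set.ncard_union_le _ _
    _ = D.ncard - T.ncard + S.ncard := by rw [Set.ncard_sdiff' hTD hD]
    _ ≤ D.ncard := by omega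

theorem Set.ncard_insert_insert_insert_singleton_le {α : Type*} (a b c d : α) :
    ({a, b, c, d} : Set α).ncard ≤ 4 := by
  classical
  simpa [← Finset.coe_insert, ← Finset.coe_singleton, Set.ncard_coe_finset] using
    (Finset.card_le_four : ({a, b, c, d} : Finset α).card ≤ 4)

section NeighbourhoodPartition

variable {V : Type*} {G : SimpleGraph V} {v w u x : V}

theorem adj_of_mem_Npair (hu : u ∈ Npair G v w) : G.Adj u v ∨ G.Adj u w :=
  hu.1.imp G.adj_symm G.adj_symm

theorem NP2_union_NP3_eq : NP2 G v w ∪ NP3 G v w = Npair G v w \ NP1 G v w := by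
  ext x
  constructor
  · rintro (hx | hx)
    · exact ⟨hx.1, hx.2.1⟩
    · exact ⟨hx.1, fun h => hx.2 (Or.inl h)⟩
  · rintro ⟨hxN, hx1⟩
    by_cases hx2 : x ∈ NP2 G v w
    · exact Or.inl hx2
    · exact Or.inr ⟨hxN, by rintro (h | h) <;> contradiction⟩

theorem mem_Npair_union_of_adj_of_not_mem_NP1 (hx : x ∈ Npair G v w) (hx1 : x ∉ NP1 G v w)
    (hxu : G.Adj x u) : u ∈ Npair G v w ∪ {v, w} := by
  by_contra hu
  exact hx1 ⟨hx, u, hxu, hu⟩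

theorem adj_or_eq_of_adj_of_mem_NP2_union_NP3 (hx : x ∈ NP2 G v w ∪ NP3 G v w)
    (hxu : G.Adj x u) : G.Adj u v ∨ G.Adj u w ∨ u = v ∨ u = w := by
  rw [NP2_union_NP3_eq] at hx
  rcases mem_Npair_union_of_adj_of_not_mem_NP1 hx.1 hx.2 hxu with hu | hu
  · exact (adj_of_mem_Npair hu).imp_right Or.inl
  · exact Or.inr (Or.inr hu)

theorem mem_NP2_union_NP3_of_adj_of_mem_NP3 (hu : u ∈ NP3 G v w) (hux : G.Adj u x)
    (hxv : x ≠ v) (hxw : x ≠ w) : x ∈ NP2 G v w ∪ NP3 G v w := by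
  have hu1 : u ∉ NP1 G v w := fun h => hu.2 (Or.inl h)
  have hx1 : x ∉ NP1 G v w := fun h => hu.2 (Or.inr ⟨hu.1, hu1, x, h, hux⟩)
  rcases mem_Npair_union_of_adj_of_not_mem_NP1 hu.1 hu1 hux with hx | hx | hx
  · rw [NP2_union_NP3_eq]
    exact ⟨hx, hx1⟩
  · exact absurd hx hxv
  · exact absurd hx hxw

theorem four_le_ncard_inter_NP2_union_NP3 {D : Set V}
    (hno : ¬ ∃ T : Set V, T ⊆ NP2 G v w ∪ NP3 G v w ∧ T.ncard ≤ 3 ∧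
      ∀ u ∈ NP3 G v w, ∃ x ∈ T, G.Adj u x)
    (hD : G.IsTotalDominating D) (hvD : v ∉ D) (hwD : w ∉ D) :
    4 ≤ (D ∩ (NP2 G v w ∪ NP3 G v w)).ncard := by
  by_contra! hlt
  refine hno ⟨D ∩ _, Set.inter_subset_right, by omega, fun u hu => ?_⟩
  obtain ⟨d, hdD, hud⟩ := hD u
  have hdv : d ≠ v := fun h => hvD (h ▸ hdD)
  have hdw : d ≠ w := fun h => hwD (h ▸ hdD)
  exact ⟨d, ⟨hdD, mem_NP2_union_NP3_of_adj_of_mem_NP3 hu hud hdv hdw⟩, hud⟩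

end NeighbourhoodPartition

theorem fact1_tds_meets_pair_general {V : Type*} (G : SimpleGraph V) (v w : V)
    (hv : ∃ s, G.Adj v s) (hw : ∃ t, G.Adj w t)
    (hno : ¬ ∃ T : Set V, T ⊆ NP2 G v w ∪ NP3 G v w ∧ T.ncard ≤ 3 ∧
      ∀ u ∈ NP3 G v w, ∃ x ∈ T, G.Adj u x)
    (D : Set V) (hDfin : D.Finite) (hD : ∀ u : V, ∃ d ∈ D, G.Adj u d) :
    (v ∈ D ∨ w ∈ D ∨ 4 ≤ (D ∩ (NP2 G v w ∪ NP3 G v w)).ncard) ∧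
    ∃ D' : Set V, D'.Finite ∧ (∀ u : V, ∃ d ∈ D', G.Adj u d) ∧
      D'.ncard ≤ D.ncard ∧ (v ∈ D' ∨ w ∈ D') := by
  by_cases hvD : v ∈ D
  · exact ⟨Or.inl hvD, D, hDfin, hD, le_rfl, Or.inl hvD⟩
  by_cases hwD : w ∈ D
  · exact ⟨Or.inr (Or.inl hwD), D, hDfin, hD, le_rfl, Or.inr hwD⟩
  obtain ⟨s, hs⟩ := hv
  obtain ⟨t, ht⟩ := hw
  set T := D ∩ (NP2 G v w ∪ NP3 G v w)
  have hT : 4 ≤ T.ncard := four_le_ncard_inter_NP2_union_NP3 hno hD hvD hwD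
  refine ⟨Or.inr (Or.inr hT), D \ T ∪ {v, w, s, t}, hDfin.sdiff.union (Set.toFinite _),
    SimpleGraph.IsTotalDominating.sdiff_union hD
      (fun x hx _ hxu => adj_or_eq_of_adj_of_mem_NP2_union_NP3 hx.2 hxu) hs ht,
    Set.ncard_sdiff_union_le hDfin Set.inter_subset_left
      ((Set.ncard_insert_insert_insert_singleton_le v w s t).trans hT),
    Or.inl (by simp)⟩

/-- if no subset of N₂(v,w) ∪ N₃(v,w) of size at most 3 dominates N₃(v,w),
then every total dominating set contains v or w, or at least 4 vertices of
N₂(v,w) ∪ N₃(v,w); and one can always obtain an equally small total dominating set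
meeting {v,w}. -/
theorem fact1_tds_meets_pair {V : Type*} (G : SimpleGraph V) (v w : V) (hvw : v ≠ w)
    (hN3 : (NP3 G v w).Nonempty)
    (hv : ∃ s, G.Adj v s) (hw : ∃ t, G.Adj w t)
    (hno : ¬ ∃ T : Set V, T ⊆ NP2 G v w ∪ NP3 G v w ∧ T.ncard ≤ 3 ∧
      ∀ u ∈ NP3 G v w, ∃ x ∈ T, G.Adj u x)
    (D : Set V) (hDfin : D.Finite) (hD : ∀ u : V, ∃ d ∈ D, G.Adj u d) :
    (v ∈ D ∨ w ∈ D ∨ 4 ≤ (D ∩ (NP2 G v w ∪ NP3 G v w)).ncard) ∧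
    ∃ D' : Set V, D'.Finite ∧ (∀ u : V, ∃ d ∈ D', G.Adj u d) ∧
      D'.ncard ≤ D.ncard ∧ (v ∈ D' ∨ w ∈ D') :=
  fact1_tds_meets_pair_general G v w hv hw hno D hDfin hD
end
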